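/- Let f ∈ L²(ℝ) with ‖V_φ f‖_{L¹(ℝ²)} = 1, and let Δ ⊆ ℝ² be measurable with finite Lebesgue measure |Δ| < 1. Then ∫_Δ |V_φ f(x,ω)| dx dω < 1, i.e. the STFT with Gaussian window cannot have all (or at least a 1-fraction) of its L¹ mass concentrated on a set of measure less than 1. -/

import Mathlib

open MeasureTheory Complex

/-- The normalized Gaussian window `φ(t) = 2^{1/4} e^{-πt²}`. -/
noncomputable def gaussWindow (t : ℝ) : ℂ :=
  ((2 : ℝ) ^ ((1 : ℝ) / 4) * Real.exp (-Real.pi * t ^ 2) : ℝ)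

/-- Short-time Fourier transform with Gaussian window. -/
noncomputable def STFT (f : ℝ → ℂ) (x ω : ℝ) : ℂ :=
  ∫ t : ℝ, f t * (starRingEnd ℂ) (gaussWindow (t - x)) *
    Complex.exp (-2 * Real.pi * Complex.I * ω * t)

/-!
At `z = x - iω`, `|V_φ f(x, ω)| = e^{-π|z|²/2} |F(z)|` with `F` the Bargmann transform of `f`,
an entire function. For any centre `c`, `w ↦ F(w) e^{-π(w - c) c̄}` is entire as well, and on the
circle `|w - c| = r` its modulus is `e^{π(|c|² + r²)/2}` times `u(w) = e^{-π|w|²/2} |F(w)|`; so the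
mean value property gives `e^{-πr²/2} u(c) ≤` the average of `u` over that circle. Integrating
against `2πr dr` and using `∫₀^∞ 2πr e^{-πr²/2} dr = 2` yields `2 u(c) ≤ ‖u‖₁ = ‖V_φ f‖₁`. Hence
`|V_φ f| ≤ 1/2` everywhere, and `∫_Δ |V_φ f| ≤ |Δ|/2 < 1`.
-/

open scoped Real ComplexConjugate
open Set Metric

theorem norm_le_circleAverage_norm {E : Type*} [NormedAddCommGroup E] [NormedSpace ℂ E]
    [CompleteSpace E] {G : ℂ → E} {c : ℂ} {R : ℝ} (hG : DiffContOnCl ℂ G (ball c |R|)) :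
    ‖G c‖ ≤ Real.circleAverage (‖G ·‖) c R := by
  calc ‖G c‖ = ‖Real.circleAverage G c R‖ := by rw [hG.circleAverage]
    _ ≤ Real.circleAverage (‖G ·‖) c R := by
      simp only [Real.circleAverage_def, norm_smul, Real.norm_eq_abs, smul_eq_mul,
        abs_of_pos (inv_pos.2 Real.two_pi_pos)]
      gcongr
      exact intervalIntegral.norm_integral_le_integral_norm Real.two_pi_pos.le

noncomputable def fockModulus (F : ℂ → ℂ) (z : ℂ) : ℝ :=
  Real.exp (-π * ‖z‖ ^ 2 / 2) * ‖F z‖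

theorem fockModulus_nonneg (F : ℂ → ℂ) (z : ℂ) : 0 ≤ fockModulus F z := by
  unfold fockModulus; positivity

theorem Continuous.fockModulus {F : ℂ → ℂ} (hF : Continuous F) : Continuous (fockModulus F) := by
  unfold _root_.fockModulus; fun_prop

theorem fockModulus_eq_of_mem_sphere (F : ℂ → ℂ) {c w : ℂ} {R : ℝ} (hw : w ∈ sphere c |R|) :
    fockModulus F w = Real.exp (-π * ‖c‖ ^ 2 / 2 - π * R ^ 2 / 2) *
      ‖F w * cexp (-π * (w - c) * conj c)‖ := by
  have hR : (w.re - c.re) ^ 2 + (w.im - c.im) ^ 2 = R ^ 2 := by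
    rw [mem_sphere, dist_eq_norm, ← sq_eq_sq₀ (norm_nonneg _) (abs_nonneg R), sq_abs,
      ← Complex.normSq_eq_norm_sq, Complex.normSq_apply] at hw
    simp only [Complex.sub_re, Complex.sub_im] at hw
    linear_combination hw
  rw [fockModulus, norm_mul, Complex.norm_exp, mul_comm (Real.exp _) ‖F w‖, mul_left_comm,
    ← Real.exp_add]
  congr 2
  simp only [← Complex.normSq_eq_norm_sq, Complex.normSq_apply, Complex.mul_re, Complex.mul_im,
    Complex.sub_re, Complex.sub_im, Complex.neg_re, Complex.neg_im, Complex.ofReal_re,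
    Complex.ofReal_im, Complex.conj_re, Complex.conj_im]
  linear_combination (-π / 2) * hR

theorem exp_mul_fockModulus_le_circleAverage {F : ℂ → ℂ} (hF : Differentiable ℂ F) (c : ℂ)
    (R : ℝ) :
    Real.exp (-π * R ^ 2 / 2) * fockModulus F c ≤ Real.circleAverage (fockModulus F) c R := by
  set G : ℂ → ℂ := fun w ↦ F w * cexp (-π * (w - c) * conj c)
  have hG : Differentiable ℂ G := hF.mul (by fun_prop)
  calc Real.exp (-π * R ^ 2 / 2) * fockModulus F c
      = Real.exp (-π * ‖c‖ ^ 2 / 2 - π * R ^ 2 / 2) * ‖G c‖ := by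
        simp [G, fockModulus, sub_eq_add_neg, Real.exp_add, neg_div]
        ring
    _ ≤ Real.exp (-π * ‖c‖ ^ 2 / 2 - π * R ^ 2 / 2) * Real.circleAverage (‖G ·‖) c R := by
        gcongr
        exact norm_le_circleAverage_norm hG.diffContOnCl
    _ = Real.circleAverage (fockModulus F) c R := by
        rw [← smul_eq_mul, ← Real.circleAverage_fun_smul]
        exact Real.circleAverage_congr_sphere fun w hw ↦ (fockModulus_eq_of_mem_sphere F hw).symm

theorem lintegral_Ioo_circleMap_eq_circleAverage {u : ℂ → ℝ} (hu : Continuous u)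
    (hu0 : ∀ z, 0 ≤ u z) (c : ℂ) (R : ℝ) :
    ∫⁻ θ in Ioo (-π) π, ENNReal.ofReal (u (circleMap c R θ)) =
      ENNReal.ofReal (2 * π * Real.circleAverage u c R) := by
  have hu' : Continuous fun θ ↦ u (circleMap c R θ) := hu.comp (continuous_circleMap c R)
  have hav : 2 * π * Real.circleAverage u c R = ∫ θ in Ioo (-π) π, u (circleMap c R θ) := by
    rw [Real.circleAverage_eq_integral_add (-π), smul_eq_mul, ← mul_assoc,
      mul_inv_cancel₀ Real.two_pi_pos.ne', one_mul,
      intervalIntegral.integral_comp_add_right (fun θ ↦ u (circleMap c R θ)), zero_add,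
      show 2 * π + -π = π by ring, intervalIntegral.integral_of_le (by linarith [Real.pi_pos]),
      integral_Ioc_eq_integral_Ioo]
  rw [hav, ofReal_integral_eq_lintegral_ofReal
    ((hu'.integrableOn_Icc).mono_set Ioo_subset_Icc_self) (ae_of_all _ fun θ ↦ hu0 _)]

theorem lintegral_eq_lintegral_circleAverage {u : ℂ → ℝ} (hu : Continuous u)
    (hu0 : ∀ z, 0 ≤ u z) (c : ℂ) :
    ∫⁻ z, ENNReal.ofReal (u z) =
      ∫⁻ r in Ioi 0, ENNReal.ofReal (2 * π * r * Real.circleAverage u c r) := by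
  have hpolar : ∀ p : ℝ × ℝ, c + Complex.polarCoord.symm p = circleMap c p.1 p.2 := fun p ↦ by
    rw [Complex.polarCoord_symm_apply, circleMap, Complex.exp_mul_I]
    push_cast; rfl
  calc ∫⁻ z, ENNReal.ofReal (u z)
      = ∫⁻ z, ENNReal.ofReal (u (c + z)) := (lintegral_add_left_eq_self _ c).symm
    _ = ∫⁻ p in Ioi 0 ×ˢ Ioo (-π) π,
          ENNReal.ofReal p.1 * ENNReal.ofReal (u (circleMap c p.1 p.2)) := by
        rw [← Complex.lintegral_comp_polarCoord_symm]
        change ∫⁻ p in Ioi 0 ×ˢ Ioo (-π) π, _ = _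
        simp only [hpolar, smul_eq_mul]
    _ = ∫⁻ r in Ioi 0, ∫⁻ θ in Ioo (-π) π,
          ENNReal.ofReal r * ENNReal.ofReal (u (circleMap c r θ)) := by
        rw [Measure.volume_eq_prod, ← Measure.prod_restrict]
        exact lintegral_prod _ (by fun_prop)
    _ = ∫⁻ r in Ioi 0, ENNReal.ofReal (2 * π * r * Real.circleAverage u c r) := by
        refine setLIntegral_congr_fun measurableSet_Ioi fun r hr ↦ ?_
        rw [lintegral_const_mul _ (by fun_prop), lintegral_Ioo_circleMap_eq_circleAverage hu hu0,
          ← ENNReal.ofReal_mul (le_of_lt hr)]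
        ring_nf

theorem integral_Ioi_mul_exp_neg_mul_sq {b : ℝ} (hb : 0 < b) :
    ∫ r in Ioi 0, r * Real.exp (-b * r ^ 2) = (2 * b)⁻¹ := by
  apply Complex.ofReal_injective
  rw [← integral_complex_ofReal]
  push_cast
  exact integral_mul_cexp_neg_mul_sq (by simpa using hb)

theorem two_mul_fockModulus_le_lintegral {F : ℂ → ℂ} (hF : Differentiable ℂ F) (c : ℂ) :
    ENNReal.ofReal (2 * fockModulus F c) ≤ ∫⁻ z, ENNReal.ofReal (fockModulus F z) := by
  have hmass : ∫ r in Ioi 0, 2 * π * r * Real.exp (-π * r ^ 2 / 2) * fockModulus F c =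
      2 * fockModulus F c := by
    calc ∫ r in Ioi 0, 2 * π * r * Real.exp (-π * r ^ 2 / 2) * fockModulus F c
        = 2 * π * (∫ r in Ioi 0, r * Real.exp (-(π / 2) * r ^ 2)) * fockModulus F c := by
          rw [← integral_const_mul, ← integral_mul_const]
          congr 1 with r
          ring_nf
      _ = 2 * fockModulus F c := by
          rw [integral_Ioi_mul_exp_neg_mul_sq (by positivity)]
          field_simp
  rw [lintegral_eq_lintegral_circleAverage hF.continuous.fockModulus (fockModulus_nonneg F) c,
    ← hmass, ofReal_integral_eq_lintegral_ofReal]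
  · refine setLIntegral_mono' measurableSet_Ioi fun r hr ↦ ENNReal.ofReal_le_ofReal ?_
    have := exp_mul_fockModulus_le_circleAverage hF c r
    rw [mem_Ioi] at hr
    calc 2 * π * r * Real.exp (-π * r ^ 2 / 2) * fockModulus F c
        = 2 * π * r * (Real.exp (-π * r ^ 2 / 2) * fockModulus F c) := by ring
      _ ≤ 2 * π * r * Real.circleAverage (fockModulus F) c r := by gcongr
  · have h := ((integrable_mul_exp_neg_mul_sq (b := π / 2) (by positivity)).const_mul
      (2 * π)).mul_const (fockModulus F c)
    refine (h.congr (ae_of_all _ fun r ↦ ?_)).integrableOn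
    ring_nf
  · refine (ae_restrict_iff' measurableSet_Ioi).2 (ae_of_all _ fun r (hr : 0 < r) ↦ ?_)
    have := fockModulus_nonneg F c
    positivity

theorem norm_cexp_gaussian_kernel_le {t c : ℝ} {z : ℂ} (hz : |z.re| ≤ c) :
    ‖cexp (-π * t ^ 2 + 2 * π * t * z)‖ ≤
      Real.exp (2 * π * c ^ 2) * Real.exp (-π * t ^ 2 / 2) := by
  have hre : (-π * t ^ 2 + 2 * π * t * z : ℂ).re = -π * t ^ 2 + 2 * π * t * z.re := by
    simp [← Complex.ofReal_pow]
  have hsq : z.re ^ 2 ≤ c ^ 2 := sq_le_sq' (abs_le.1 hz).1 (abs_le.1 hz).2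
  have hkey : 0 ≤ (t - 2 * z.re) ^ 2 / 2 + 2 * (c ^ 2 - z.re ^ 2) := by
    nlinarith [sq_nonneg (t - 2 * z.re)]
  rw [Complex.norm_exp, hre, ← Real.exp_add, Real.exp_le_exp]
  nlinarith [mul_nonneg Real.pi_pos.le hkey]

theorem memLp_two_abs_pow_mul_exp_neg_pi_mul_sq_div_two (n : ℕ) :
    MemLp (fun t : ℝ ↦ |t| ^ n * Real.exp (-π * t ^ 2 / 2)) 2 := by
  refine (memLp_two_iff_integrable_sq (by fun_prop)).2 ?_
  convert integrable_rpow_mul_exp_neg_mul_sq Real.pi_pos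
    ((neg_one_lt_zero).trans_le (Nat.cast_nonneg (2 * n))) using 2 with t
  rw [Real.rpow_natCast, mul_pow, ← pow_mul, mul_comm n, pow_mul, sq_abs, ← Real.exp_nat_mul]
  ring_nf

theorem integrable_norm_mul_abs_pow_mul_exp {f : ℝ → ℂ} (hf : MemLp f 2) (n : ℕ) :
    Integrable fun t ↦ ‖f t‖ * (|t| ^ n * Real.exp (-π * t ^ 2 / 2)) :=
  hf.norm.integrable_mul (memLp_two_abs_pow_mul_exp_neg_pi_mul_sq_div_two n)

theorem differentiable_integral_mul_gaussian_kernel {f : ℝ → ℂ} (hf : MemLp f 2) :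
    Differentiable ℂ fun z : ℂ ↦ ∫ t : ℝ, f t * cexp (-π * t ^ 2 + 2 * π * t * z) := by
  intro z₀
  set c := |z₀.re| + 1
  have hball : ∀ z ∈ ball z₀ 1, |z.re| ≤ c := fun z hz ↦ by
    have h := (abs_re_le_norm (z - z₀)).trans (mem_ball_iff_norm.1 hz).le
    rw [Complex.sub_re] at h
    linarith [abs_sub_abs_le_abs_sub z.re z₀.re]
  have hmeas : ∀ z : ℂ,
      AEStronglyMeasurable fun t : ℝ ↦ f t * cexp (-π * t ^ 2 + 2 * π * t * z) :=
    fun z ↦ hf.aestronglyMeasurable.mul (by fun_prop)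
  have hint : Integrable fun t : ℝ ↦ f t * cexp (-π * t ^ 2 + 2 * π * t * z₀) := by
    refine ((integrable_norm_mul_abs_pow_mul_exp hf 0).const_mul
      (Real.exp (2 * π * c ^ 2))).mono' (hmeas z₀) (ae_of_all _ fun t ↦ ?_)
    rw [norm_mul]
    have := norm_cexp_gaussian_kernel_le (t := t) (hball z₀ (mem_ball_self one_pos))
    calc ‖f t‖ * ‖cexp (-π * t ^ 2 + 2 * π * t * z₀)‖
        ≤ ‖f t‖ * (Real.exp (2 * π * c ^ 2) * Real.exp (-π * t ^ 2 / 2)) := by gcongr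
      _ = _ := by ring
  refine (hasDerivAt_integral_of_dominated_loc_of_deriv_le
    (F' := fun z t ↦ f t * (cexp (-π * t ^ 2 + 2 * π * t * z) * (2 * π * t)))
    (bound := fun t ↦ 2 * π * Real.exp (2 * π * c ^ 2) *
      (‖f t‖ * (|t| ^ 1 * Real.exp (-π * t ^ 2 / 2))))
    (ball_mem_nhds z₀ one_pos) (Filter.Eventually.of_forall hmeas) hint
    (hf.aestronglyMeasurable.mul (by fun_prop)) (ae_of_all _ fun t z hz ↦ ?_)
    ((integrable_norm_mul_abs_pow_mul_exp hf 1).const_mul _)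
    (ae_of_all _ fun t z _ ↦ ?_)).2.differentiableAt
  · have := norm_cexp_gaussian_kernel_le (t := t) (hball z hz)
    have h2pt : ‖(2 * π * t : ℂ)‖ = 2 * π * |t| := by
      simp [Complex.norm_real, abs_of_pos Real.pi_pos]
    rw [norm_mul, norm_mul, h2pt]
    calc ‖f t‖ * (‖cexp (-π * t ^ 2 + 2 * π * t * z)‖ * (2 * π * |t|))
        ≤ ‖f t‖ * (Real.exp (2 * π * c ^ 2) * Real.exp (-π * t ^ 2 / 2) * (2 * π * |t|)) := by
          gcongr
      _ = _ := by ring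
  · exact ((((hasDerivAt_id' z).const_mul (2 * π * t : ℂ)).const_add
      (-π * t ^ 2 : ℂ)).cexp.const_mul (f t)).congr_deriv (by ring)

noncomputable def bargmannTransform (f : ℝ → ℂ) (z : ℂ) : ℂ :=
  (((2 : ℝ) ^ ((1 : ℝ) / 4) : ℝ) : ℂ) * cexp (-π * z ^ 2 / 2) *
    ∫ t : ℝ, f t * cexp (-π * t ^ 2 + 2 * π * t * z)

theorem differentiable_bargmannTransform {f : ℝ → ℂ} (hf : MemLp f 2) :
    Differentiable ℂ (bargmannTransform f) :=
  ((differentiable_const _).mul (by fun_prop)).mul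
    (differentiable_integral_mul_gaussian_kernel hf)

theorem stft_eq_integral (f : ℝ → ℂ) (x ω : ℝ) :
    STFT f x ω = (((2 : ℝ) ^ ((1 : ℝ) / 4) * Real.exp (-π * x ^ 2) : ℝ) : ℂ) *
      ∫ t : ℝ, f t * cexp (-π * t ^ 2 + 2 * π * t * (x - ω * I)) := by
  rw [STFT, ← integral_const_mul]
  congr 1 with t
  have hexp : cexp (-π * (t - x) ^ 2) * cexp (-2 * π * I * ω * t) =
      cexp (-π * x ^ 2) * cexp (-π * t ^ 2 + 2 * π * t * (x - ω * I)) := by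
    rw [← Complex.exp_add, ← Complex.exp_add]
    ring_nf
  simp only [gaussWindow, Complex.conj_ofReal]
  push_cast
  linear_combination ((((2 : ℝ) ^ ((1 : ℝ) / 4) : ℝ) : ℂ) * f t) * hexp

theorem norm_stft_eq_fockModulus (f : ℝ → ℂ) (x ω : ℝ) :
    ‖STFT f x ω‖ = fockModulus (bargmannTransform f) (x - ω * I) := by
  have hnorm : ‖(x - ω * I : ℂ)‖ ^ 2 = x ^ 2 + ω ^ 2 := by
    rw [← Complex.normSq_eq_norm_sq, Complex.normSq_apply]
    simp
    ring
  have hre : (-π * (x - ω * I) ^ 2 / 2 : ℂ).re = -π * (x ^ 2 - ω ^ 2) / 2 := by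
    simp [sq]
  rw [stft_eq_integral, fockModulus, bargmannTransform, norm_mul, norm_mul, norm_mul,
    Complex.norm_real, Complex.norm_real, Complex.norm_exp, hnorm, hre,
    Real.norm_of_nonneg (by positivity), Real.norm_of_nonneg (by positivity),
    show Real.exp (-π * x ^ 2) = Real.exp (-π * (x ^ 2 + ω ^ 2) / 2) *
      Real.exp (-π * (x ^ 2 - ω ^ 2) / 2) by rw [← Real.exp_add]; ring_nf]
  ring

theorem measurePreserving_sub_mul_I :
    MeasurePreserving (fun p : ℝ × ℝ ↦ (p.1 : ℂ) - p.2 * I) := by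
  have h := Complex.volume_preserving_equiv_real_prod.symm.comp
    ((MeasurePreserving.id volume).prod (Measure.measurePreserving_neg (volume : Measure ℝ)))
  rw [Measure.volume_eq_prod]
  convert h using 1
  funext p
  apply Complex.ext <;> simp

theorem norm_stft_le_half_integral {f : ℝ → ℂ} (hf : MemLp f 2)
    (hint : Integrable fun p : ℝ × ℝ ↦ ‖STFT f p.1 p.2‖) (x ω : ℝ) :
    ‖STFT f x ω‖ ≤ (∫ p : ℝ × ℝ, ‖STFT f p.1 p.2‖) / 2 := by
  have hB := differentiable_bargmannTransform hf
  have hmass : ∫⁻ z, ENNReal.ofReal (fockModulus (bargmannTransform f) z) =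
      ENNReal.ofReal (∫ p : ℝ × ℝ, ‖STFT f p.1 p.2‖) := by
    rw [ofReal_integral_eq_lintegral_ofReal hint (ae_of_all _ fun _ ↦ norm_nonneg _),
      ← measurePreserving_sub_mul_I.lintegral_comp
        hB.continuous.fockModulus.measurable.ennreal_ofReal]
    simp_rw [norm_stft_eq_fockModulus]
  have h := two_mul_fockModulus_le_lintegral hB (x - ω * I)
  rw [hmass, ← norm_stft_eq_fockModulus,
    ENNReal.ofReal_le_ofReal_iff (integral_nonneg fun _ ↦ norm_nonneg _)] at h
  linarith

theorem stft_uncertainty_small_sets_general (f : ℝ → ℂ)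
    (hf : MeasureTheory.MemLp f 2 (volume : Measure ℝ))
    (hVnorm : (∫ p : ℝ × ℝ, ‖STFT f p.1 p.2‖) = 1)
    (Δ : Set (ℝ × ℝ)) (hΔmeas : volume Δ < 1) :
    ∫ p in Δ, ‖STFT f p.1 p.2‖ < 1 := by
  have hint : Integrable fun p : ℝ × ℝ ↦ ‖STFT f p.1 p.2‖ :=
    Integrable.of_integral_ne_zero (by rw [hVnorm]; exact one_ne_zero)
  have hhalf : ∀ p : ℝ × ℝ, ‖‖STFT f p.1 p.2‖‖ ≤ 1 / 2 := fun p ↦ by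
    simpa [hVnorm] using norm_stft_le_half_integral hf hint p.1 p.2
  have hΔ : volume.real Δ ≤ 1 :=
    ENNReal.toReal_le_of_le_ofReal zero_le_one (by simpa using hΔmeas.le)
  calc ∫ p in Δ, ‖STFT f p.1 p.2‖ ≤ ‖∫ p in Δ, ‖STFT f p.1 p.2‖‖ := Real.le_norm_self _
    _ ≤ 1 / 2 * volume.real Δ :=
        norm_setIntegral_le_of_norm_le_const (hΔmeas.trans ENNReal.one_lt_top) fun p _ ↦ hhalf p
    _ < 1 := by linarith

/-- L¹ uncertainty principle for the STFT (ε = 0 case of Corollary 3): if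
`‖V_φ f‖_{L¹(ℝ²)} = 1` and `|Δ| < 1`, then `∫_Δ |V_φ f| < 1`. -/
theorem stft_uncertainty_small_sets (f : ℝ → ℂ)
    (hf : MeasureTheory.MemLp f 2 (volume : Measure ℝ))
    (hV1 : Integrable (fun p : ℝ × ℝ => STFT f p.1 p.2))
    (hVnorm : (∫ p : ℝ × ℝ, ‖STFT f p.1 p.2‖) = 1)
    (Δ : Set (ℝ × ℝ)) (hΔ : MeasurableSet Δ) (hΔmeas : volume Δ < 1) :
    ∫ p in Δ, ‖STFT f p.1 p.2‖ < 1 :=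
  stft_uncertainty_small_sets_general f hf hVnorm Δ hΔmeas
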